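/- arXiv:1705.07473 — 3 statements merged into one kernel-verified Lean document; each statement's English description precedes it below -/
import Mathlib

section
/- Let p ≥ 1, λ > 0, μ > 0, let ω : ℝ → ℝ^m be continuous with finite p-variation on every compact interval, and let (τ_n)_{n≥0} be the associated greedy times: τ_0 = 0 and τ_{n+1} is the unique time > τ_n with (τ_{n+1} − τ_n)^λ + |||ω|||_{p-var,[τ_n,τ_{n+1}]} = μ. For T > 0 set N(T,ω) := sup{n : τ_n ≤ T}. Then for every p' ≥ max{p, 1/λ} one has N(T,ω) ≤ (2^{p'−1}/μ^{p'}) · ( T^{p'λ} + |||ω|||^{p'}_{p-var,[0,T]} ); more generally, for 0 ≤ a < b, the number N(a,b,ω) := sup{n : τ_n ≤ b} − inf{n : τ_n ≥ a} satisfies N(a,b,ω) ≤ (2^{p'−1}/μ^{p'}) · ( (b−a)^{p'λ} + |||ω|||^{p'}_{p-var,[a,b]} ). -/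
open scoped BigOperators
open Set

noncomputable section

/-- Euclidean space `ℝ^n`. -/
abbrev Ed (n : ℕ) : Type := EuclideanSpace ℝ (Fin n)

section PVarDefs

variable {E F : Type*} [NormedAddCommGroup E] [NormedSpace ℝ E]
  [NormedAddCommGroup F] [NormedSpace ℝ F]

/-- The set of sums `Σ_i ‖x (t (i+1)) - x (t i)‖ ^ p` over all finite partitions
`a = t 0 < t 1 < ⋯ < t n = b` of `[a,b]`. -/
def pVarSums (p : ℝ) (x : ℝ → E) (a b : ℝ) : Set ℝ :=
  { v | ∃ n : ℕ, ∃ t : Fin (n + 1) → ℝ, StrictMono t ∧ t 0 = a ∧ t (Fin.last n) = b ∧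
      v = ∑ i : Fin n, ‖x (t i.succ) - x (t i.castSucc)‖ ^ p }

/-- The `p`-variation seminorm `|||x|||_{p-var,[a,b]}`. -/
def pVar (p : ℝ) (x : ℝ → E) (a b : ℝ) : ℝ :=
  sSup (pVarSums p x a b) ^ (1 / p)

/-- `x` is of finite `p`-variation on `[a,b]`. -/
def FinitePVar (p : ℝ) (x : ℝ → E) (a b : ℝ) : Prop :=
  BddAbove (pVarSums p x a b)

/-- The `p`-variation norm `‖x‖_{p-var,[a,b]} = ‖x a‖ + |||x|||_{p-var,[a,b]}`. -/
def pVarNorm (p : ℝ) (x : ℝ → E) (a b : ℝ) : ℝ :=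
  ‖x a‖ + pVar p x a b

/-- A control function on `[a,b]`: continuous on the simplex, vanishing on the diagonal,
superadditive and nonnegative. -/
def IsControlOn (a b : ℝ) (w : ℝ → ℝ → ℝ) : Prop :=
  ContinuousOn (fun pr : ℝ × ℝ => w pr.1 pr.2) {pr : ℝ × ℝ | a ≤ pr.1 ∧ pr.1 ≤ pr.2 ∧ pr.2 ≤ b} ∧
  (∀ t : ℝ, a ≤ t → t ≤ b → w t t = 0) ∧
  (∀ s t u : ℝ, a ≤ s → s ≤ t → t ≤ u → u ≤ b → w s t + w t u ≤ w s u) ∧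
  (∀ s t : ℝ, a ≤ s → s ≤ t → t ≤ b → 0 ≤ w s t)

/-- A tagged partition `a = t 0 < t 1 < ⋯ < t n = b` of `[a,b]`, with tags
`tag i ∈ [t i, t (i+1)]`. -/
structure TaggedPartition (a b : ℝ) where
  n : ℕ
  t : Fin (n + 1) → ℝ
  tag : Fin n → ℝ
  mono : StrictMono t
  first : t 0 = a
  last : t (Fin.last n) = b
  tag_mem : ∀ i : Fin n, tag i ∈ Set.Icc (t i.castSucc) (t i.succ)

/-- The mesh of a tagged partition. -/
def TaggedPartition.mesh {a b : ℝ} (P : TaggedPartition a b) : ℝ :=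
  ⨆ i : Fin P.n, (P.t i.succ - P.t i.castSucc)

/-- Riemann–Stieltjes sum of `x` against `ω` along a tagged partition. -/
def RSSum (x : ℝ → E →L[ℝ] F) (ω : ℝ → E) {a b : ℝ} (P : TaggedPartition a b) : F :=
  ∑ i : Fin P.n, x (P.tag i) (ω (P.t i.succ) - ω (P.t i.castSucc))

/-- `v` is the Young integral `∫_a^b x dω`: the Riemann–Stieltjes sums converge to `v`
as the mesh tends to `0`. -/
def IsYoungIntegral (x : ℝ → E →L[ℝ] F) (ω : ℝ → E) (a b : ℝ) (v : F) : Prop :=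
  ∀ ε : ℝ, 0 < ε → ∃ δ : ℝ, 0 < δ ∧
    ∀ P : TaggedPartition a b, P.mesh < δ → ‖RSSum x ω P - v‖ < ε

/-- The Young integral `∫_a^b x dω` (an arbitrary value, `0`, if the limit does not exist). -/
def youngIntegral (x : ℝ → E →L[ℝ] F) (ω : ℝ → E) (a b : ℝ) : F :=
  letI := Classical.propDecidable (∃ v, IsYoungIntegral x ω a b v)
  if hv : ∃ v, IsYoungIntegral x ω a b v then hv.choose else 0

end PVarDefs


section Helpers

set_option linter.unreachableTactic false
set_option linter.unusedTactic false
set_option linter.unnecessarySeqFocus false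

variable {E : Type*} [NormedAddCommGroup E] [NormedSpace ℝ E]

lemma pVarSums_mem_nonneg {p : ℝ} {x : ℝ → E} {a b v : ℝ} (hv : v ∈ pVarSums p x a b) : 0 ≤ v := by
  obtain ⟨n, t, _, _, _, rfl⟩ := hv
  exact Finset.sum_nonneg fun i _ => Real.rpow_nonneg (norm_nonneg _) p

lemma pVarSums_nonempty (p : ℝ) (x : ℝ → E) {a b : ℝ} (hab : a ≤ b) :
    (pVarSums p x a b).Nonempty := by
  rcases eq_or_lt_of_le hab with rfl | h
  · exact ⟨0, 0, fun _ => a, fun i j hij => absurd (Fin.le_of_lt hij) (by omega), rfl, rfl, by simp⟩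
  · refine ⟨‖x b - x a‖ ^ p, 1, ![a, b], ?_, rfl, rfl, by simp⟩
    intro i j hij
    fin_cases i <;> fin_cases j <;> simp_all <;> omega

lemma mem_pVarSums_concat {E : Type*} [NormedAddCommGroup E] (p : ℝ) (x : ℝ → E)
    {a b c v w : ℝ} (hv : v ∈ pVarSums p x a b) (hw : w ∈ pVarSums p x b c) :
    v + w ∈ pVarSums p x a c := by
  obtain ⟨n1, t1, h1m, h10, h1l, rfl⟩ := hv
  obtain ⟨n2, t2, h2m, h20, h2l, rfl⟩ := hw
  set T : ℕ → ℝ := fun k => if k ≤ n1 then t1 ⟨min k n1, Nat.lt_succ_of_le (min_le_right _ _)⟩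
    else t2 ⟨min (k - n1) n2, Nat.lt_succ_of_le (min_le_right _ _)⟩ with hT
  have hT1 : ∀ k (hk : k ≤ n1), T k = t1 ⟨k, Nat.lt_succ_of_le hk⟩ := by
    intro k hk
    simp only [hT, if_pos hk]
    exact congrArg t1 (Fin.ext (by simp [min_eq_left hk]))
  have hb1 : t1 ⟨n1, Nat.lt_succ_self n1⟩ = b := by
    rw [← h1l]; exact congrArg t1 (Fin.ext rfl)
  have hb2 : t2 ⟨0, Nat.succ_pos n2⟩ = b := by
    rw [← h20]; exact congrArg t2 (Fin.ext rfl)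
  have hT2 : ∀ k (hk1 : n1 ≤ k) (hk2 : k ≤ n1 + n2),
      T k = t2 ⟨k - n1, Nat.lt_succ_of_le (by omega)⟩ := by
    intro k hk1 hk2
    rcases eq_or_lt_of_le hk1 with h | h
    · have hk : k = n1 := h.symm
      subst hk
      rw [hT1 k le_rfl, hb1, ← hb2]
      exact congrArg t2 (Fin.ext (by simp <;> omega))
    · simp only [hT, if_neg (by omega : ¬ k ≤ n1)]
      exact congrArg t2 (Fin.ext (by simp [min_eq_left (by omega : k - n1 ≤ n2)]))
  have hTmono : ∀ k l, k < l → l ≤ n1 + n2 → T k < T l := by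
    intro k l hkl hl
    rcases le_or_gt l n1 with h | h
    · rw [hT1 k (by omega), hT1 l h]
      exact h1m (by exact hkl)
    · rcases le_or_gt k n1 with h' | h'
      · rw [hT1 k h', hT2 l h.le hl]
        calc t1 ⟨k, _⟩ ≤ t1 ⟨n1, Nat.lt_succ_self n1⟩ := h1m.monotone (by exact h')
          _ = t2 ⟨0, Nat.succ_pos n2⟩ := by rw [hb1, hb2]
          _ < t2 ⟨l - n1, _⟩ := h2m (by simp [Fin.lt_def]; omega)
      · rw [hT2 k h'.le (by omega), hT2 l h.le hl]
        exact h2m (by simp [Fin.lt_def]; omega)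
  refine ⟨n1 + n2, fun i => T i.val, ?_, ?_, ?_, ?_⟩
  · intro i j hij
    exact hTmono i j hij (Nat.lt_succ_iff.mp j.isLt)
  · show T 0 = a
    rw [hT1 0 (Nat.zero_le _), ← h10]
    exact congrArg t1 (Fin.ext rfl)
  · show T (n1 + n2) = c
    rw [hT2 (n1 + n2) (by omega) le_rfl, ← h2l]
    exact congrArg t2 (Fin.ext (by simp))
  · have key : ∀ i : Fin (n1 + n2),
        ‖x (T (i.succ).val) - x (T (i.castSucc).val)‖ ^ p = ‖x (T (i.val + 1)) - x (T i.val)‖ ^ p := by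
      intro i; rfl
    rw [Finset.sum_congr rfl (fun i _ => key i),
      Fin.sum_univ_eq_sum_range (fun k => ‖x (T (k + 1)) - x (T k)‖ ^ p) (n1 + n2),
      Finset.sum_range_add]
    congr 1
    · rw [← Fin.sum_univ_eq_sum_range (fun k => ‖x (T (k + 1)) - x (T k)‖ ^ p) n1]
      refine Finset.sum_congr rfl (fun i _ => ?_)
      have e1 : t1 i.succ = T (↑i + 1) := by
        rw [hT1 _ i.isLt]; exact congrArg t1 (Fin.ext rfl)
      have e2 : t1 i.castSucc = T ↑i := by
        rw [hT1 _ (le_of_lt i.isLt)]; exact congrArg t1 (Fin.ext rfl)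
      rw [e1, e2]
    · rw [← Fin.sum_univ_eq_sum_range (fun k => ‖x (T (n1 + k + 1)) - x (T (n1 + k))‖ ^ p) n2]
      refine Finset.sum_congr rfl (fun i _ => ?_)
      have e1 : t2 i.succ = T (n1 + ↑i + 1) := by
        rw [hT2 _ (by omega) (by omega)]; exact congrArg t2 (Fin.ext (by simp <;> omega))
      have e2 : t2 i.castSucc = T (n1 + ↑i) := by
        rw [hT2 _ (by omega) (by omega)]; exact congrArg t2 (Fin.ext (by simp <;> omega))
      rw [e1, e2]


lemma sSup_pVarSums_nonneg (p : ℝ) (x : ℝ → E) {a b : ℝ} (hab : a ≤ b)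
    (hbdd : BddAbove (pVarSums p x a b)) : 0 ≤ sSup (pVarSums p x a b) := by
  obtain ⟨v, hv⟩ := pVarSums_nonempty p x hab
  exact le_trans (pVarSums_mem_nonneg hv) (le_csSup hbdd hv)

lemma sSup_pVarSums_superadd (p : ℝ) (x : ℝ → E)
    (hfin : ∀ a b : ℝ, a ≤ b → FinitePVar p x a b) {a b c : ℝ} (hab : a ≤ b) (hbc : b ≤ c) :
    sSup (pVarSums p x a b) + sSup (pVarSums p x b c) ≤ sSup (pVarSums p x a c) := by
  have h3 : BddAbove (pVarSums p x a c) := hfin a c (hab.trans hbc)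
  have h1 : ∀ v ∈ pVarSums p x a b, v ≤ sSup (pVarSums p x a c) - sSup (pVarSums p x b c) := by
    intro v hv
    have h2 : sSup (pVarSums p x b c) ≤ sSup (pVarSums p x a c) - v :=
      csSup_le (pVarSums_nonempty p x hbc) fun w hw => by
        have := le_csSup h3 (mem_pVarSums_concat p x hv hw)
        linarith
    linarith
  have := csSup_le (pVarSums_nonempty p x hab) h1
  linarith

lemma sSup_pVarSums_mono (p : ℝ) (x : ℝ → E)
    (hfin : ∀ a b : ℝ, a ≤ b → FinitePVar p x a b) {a s t b : ℝ}
    (has : a ≤ s) (hst : s ≤ t) (htb : t ≤ b) :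
    sSup (pVarSums p x s t) ≤ sSup (pVarSums p x a b) := by
  have h1 := sSup_pVarSums_superadd p x hfin has hst
  have h2 := sSup_pVarSums_superadd p x hfin (has.trans hst) htb
  have h3 := sSup_pVarSums_nonneg p x has (hfin a s has)
  have h4 := sSup_pVarSums_nonneg p x htb (hfin t b htb)
  linarith

lemma my_rpow_add_rpow_le {x y q : ℝ} (hx : 0 ≤ x) (hy : 0 ≤ y) (hq : 1 ≤ q) :
    x ^ q + y ^ q ≤ (x + y) ^ q := by
  have h := NNReal.coe_le_coe.2 (NNReal.add_rpow_le_rpow_add x.toNNReal y.toNNReal hq)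
  rw [NNReal.coe_add, NNReal.coe_rpow, NNReal.coe_rpow, NNReal.coe_rpow, NNReal.coe_add,
    Real.coe_toNNReal x hx, Real.coe_toNNReal y hy] at h
  exact h

lemma my_rpow_add_le {x y q : ℝ} (hx : 0 ≤ x) (hy : 0 ≤ y) (hq : 1 ≤ q) :
    (x + y) ^ q ≤ 2 ^ (q - 1) * (x ^ q + y ^ q) := by
  have h := NNReal.coe_le_coe.2 (NNReal.rpow_add_le_mul_rpow_add_rpow x.toNNReal y.toNNReal hq)
  rw [NNReal.coe_mul, NNReal.coe_add, NNReal.coe_rpow, NNReal.coe_rpow, NNReal.coe_rpow,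
    NNReal.coe_add, NNReal.coe_rpow, NNReal.coe_ofNat,
    Real.coe_toNNReal x hx, Real.coe_toNNReal y hy] at h
  exact h

end Helpers

/-- bound on the number of greedy times in `[0,T]` and in `[a,b]`.
The greedy times `τ n` satisfy `τ 0 = 0`, `τ n < τ (n+1)` and
`(τ (n+1) - τ n)^λ + |||ω|||_{p-var,[τ n, τ (n+1)]} = μ`. For `p' ≥ max{p, 1/λ}` one has
`N(T,ω) ≤ 2^{p'-1}/μ^{p'} (T^{p'λ} + |||ω|||^{p'}_{p-var,[0,T]})`, and similarly on `[a,b]`. -/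
theorem stmt5 {m : ℕ} (p lam μ : ℝ) (hp : 1 ≤ p) (hlam : 0 < lam) (hμ : 0 < μ)
    (ω : ℝ → Ed m) (hω : Continuous ω)
    (hfin : ∀ a b : ℝ, a ≤ b → FinitePVar p ω a b)
    (τ : ℕ → ℝ) (hτ0 : τ 0 = 0) (hτmono : ∀ n : ℕ, τ n < τ (n + 1))
    (hτ : ∀ n : ℕ, (τ (n + 1) - τ n) ^ lam + pVar p ω (τ n) (τ (n + 1)) = μ)
    (p' : ℝ) (hp' : max p (1 / lam) ≤ p') :
    (∀ T : ℝ, 0 < T →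
      ((sSup {n : ℕ | τ n ≤ T} : ℕ) : ℝ) ≤
        2 ^ (p' - 1) / μ ^ p' * (T ^ (p' * lam) + pVar p ω 0 T ^ p')) ∧
    (∀ a b : ℝ, 0 ≤ a → a < b →
      ((sSup {n : ℕ | τ n ≤ b} : ℕ) : ℝ) - ((sInf {n : ℕ | a ≤ τ n} : ℕ) : ℝ) ≤
        2 ^ (p' - 1) / μ ^ p' * ((b - a) ^ (p' * lam) + pVar p ω a b ^ p')) := by
  classical
  have hmono : Monotone τ := (strictMono_nat_of_lt_succ hτmono).monotone
  have hp0 : (0:ℝ) < p := lt_of_lt_of_le one_pos hp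
  have hp'1 : (1:ℝ) ≤ p' := hp.trans ((le_max_left p (1/lam)).trans hp')
  have hpp' : p ≤ p' := (le_max_left p (1/lam)).trans hp'
  have hq' : (1:ℝ) ≤ p' / p := (one_le_div hp0).2 hpp'
  have hlp' : (1:ℝ) ≤ lam * p' := by
    have h1 : 1 / lam ≤ p' := (le_max_right p (1/lam)).trans hp'
    rw [div_le_iff₀ hlam] at h1
    linarith [mul_comm p' lam]
  have hμp' : (0:ℝ) < μ ^ p' := Real.rpow_pos_of_pos hμ p'
  have hSnn : ∀ u v : ℝ, u ≤ v → 0 ≤ sSup (pVarSums p ω u v) :=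
    fun u v h => sSup_pVarSums_nonneg p ω h (hfin u v h)
  have hpVar_nn : ∀ u v : ℝ, u ≤ v → 0 ≤ pVar p ω u v := by
    intro u v h
    unfold pVar
    exact Real.rpow_nonneg (hSnn u v h) _
  have hpVar_rpow : ∀ u v : ℝ, u ≤ v → pVar p ω u v ^ p' = sSup (pVarSums p ω u v) ^ (p' / p) := by
    intro u v h
    rw [pVar, ← Real.rpow_mul (hSnn u v h)]
    congr 1
    field_simp
  have key : ∀ (a b : ℝ) (M N : ℕ), M ≤ N → a ≤ τ M → τ N ≤ b →
      ((N:ℝ) - (M:ℝ)) * μ ^ p' ≤ 2 ^ (p' - 1) * ((b - a) ^ (p' * lam) + pVar p ω a b ^ p') := by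
    intro a b M N hMN haM hNb
    have hab : a ≤ b := haM.trans ((hmono hMN).trans hNb)
    have step : ∀ k : ℕ, μ ^ p' ≤ 2 ^ (p' - 1) *
        ((τ (k+1) - τ k) ^ (lam * p') + (sSup (pVarSums p ω (τ k) (τ (k+1)))) ^ (p' / p)) := by
      intro k
      have hd : (0:ℝ) ≤ τ (k+1) - τ k := by linarith [hτmono k]
      have hA : (0:ℝ) ≤ (τ (k+1) - τ k) ^ lam := Real.rpow_nonneg hd _
      have hB : (0:ℝ) ≤ pVar p ω (τ k) (τ (k+1)) := hpVar_nn _ _ (le_of_lt (hτmono k))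
      calc μ ^ p' = ((τ (k+1) - τ k) ^ lam + pVar p ω (τ k) (τ (k+1))) ^ p' := by rw [hτ k]
        _ ≤ 2 ^ (p' - 1) * (((τ (k+1) - τ k) ^ lam) ^ p' + pVar p ω (τ k) (τ (k+1)) ^ p') :=
            my_rpow_add_le hA hB hp'1
        _ = _ := by rw [← Real.rpow_mul hd, hpVar_rpow _ _ (le_of_lt (hτmono k))]
    have claim1 : ∀ n, M ≤ n → ∑ k ∈ Finset.Ico M n, (τ (k+1) - τ k) ^ (lam * p')
        ≤ (τ n - τ M) ^ (lam * p') := by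
      intro n hn
      induction n, hn using Nat.le_induction with
      | base =>
        simp only [Finset.Ico_self, Finset.sum_empty]
        exact Real.rpow_nonneg (by simp) _
      | succ n hn ih =>
        rw [Finset.sum_Ico_succ_top hn]
        have h1 : (0:ℝ) ≤ τ n - τ M := sub_nonneg.2 (hmono hn)
        have h2 : (0:ℝ) ≤ τ (n+1) - τ n := le_of_lt (sub_pos.2 (hτmono n))
        calc _ ≤ (τ n - τ M) ^ (lam * p') + (τ (n+1) - τ n) ^ (lam * p') := by linarith [ih]
          _ ≤ ((τ n - τ M) + (τ (n+1) - τ n)) ^ (lam * p') := my_rpow_add_rpow_le h1 h2 hlp'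
          _ = _ := by congr 1; ring
    have claim2 : ∀ n, M ≤ n →
        ∑ k ∈ Finset.Ico M n, (sSup (pVarSums p ω (τ k) (τ (k+1)))) ^ (p'/p)
        ≤ (sSup (pVarSums p ω (τ M) (τ n))) ^ (p'/p) := by
      intro n hn
      induction n, hn using Nat.le_induction with
      | base =>
        simp only [Finset.Ico_self, Finset.sum_empty]
        exact Real.rpow_nonneg (hSnn _ _ le_rfl) _
      | succ n hn ih =>
        rw [Finset.sum_Ico_succ_top hn]
        have h1 := hSnn (τ M) (τ n) (hmono hn)
        have h2 := hSnn (τ n) (τ (n+1)) (le_of_lt (hτmono n))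
        calc _ ≤ (sSup (pVarSums p ω (τ M) (τ n))) ^ (p'/p)
              + (sSup (pVarSums p ω (τ n) (τ (n+1)))) ^ (p'/p) := by linarith [ih]
          _ ≤ ((sSup (pVarSums p ω (τ M) (τ n)))
              + sSup (pVarSums p ω (τ n) (τ (n+1)))) ^ (p'/p) :=
            my_rpow_add_rpow_le h1 h2 hq'
          _ ≤ _ := Real.rpow_le_rpow (by linarith)
              (sSup_pVarSums_superadd p ω hfin (hmono hn) (le_of_lt (hτmono n))) (by linarith)
    have hcard : ((Finset.Ico M N).card : ℝ) = (N:ℝ) - (M:ℝ) := by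
      rw [Nat.card_Ico]
      push_cast [Nat.cast_sub hMN]
      ring
    have t1 : ∑ k ∈ Finset.Ico M N, (τ (k+1) - τ k) ^ (lam * p') ≤ (b - a) ^ (p' * lam) := by
      refine (claim1 N hMN).trans ?_
      rw [mul_comm p' lam]
      exact Real.rpow_le_rpow (sub_nonneg.2 (hmono hMN)) (by linarith) (by linarith)
    have t2 : ∑ k ∈ Finset.Ico M N, (sSup (pVarSums p ω (τ k) (τ (k+1)))) ^ (p'/p)
        ≤ pVar p ω a b ^ p' := by
      refine (claim2 N hMN).trans ?_
      rw [hpVar_rpow a b hab]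
      exact Real.rpow_le_rpow (hSnn _ _ (hmono hMN))
        (sSup_pVarSums_mono p ω hfin haM (hmono hMN) hNb) (by linarith)
    have h2pos : (0:ℝ) ≤ 2 ^ (p' - 1) := Real.rpow_nonneg (by norm_num) _
    calc ((N:ℝ) - (M:ℝ)) * μ ^ p' = ∑ _k ∈ Finset.Ico M N, μ ^ p' := by
          rw [Finset.sum_const, nsmul_eq_mul, hcard]
      _ ≤ ∑ k ∈ Finset.Ico M N, 2 ^ (p' - 1) *
          ((τ (k+1) - τ k) ^ (lam * p') + (sSup (pVarSums p ω (τ k) (τ (k+1)))) ^ (p'/p)) :=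
          Finset.sum_le_sum fun k _ => step k
      _ = 2 ^ (p' - 1) * (∑ k ∈ Finset.Ico M N, (τ (k+1) - τ k) ^ (lam * p')
          + ∑ k ∈ Finset.Ico M N, (sSup (pVarSums p ω (τ k) (τ (k+1)))) ^ (p'/p)) := by
          rw [← Finset.mul_sum, Finset.sum_add_distrib]
      _ ≤ 2 ^ (p' - 1) * ((b - a) ^ (p' * lam) + pVar p ω a b ^ p') :=
          mul_le_mul_of_nonneg_left (by linarith) h2pos
  have rhs_nonneg : ∀ a b : ℝ, a ≤ b →
      0 ≤ 2 ^ (p' - 1) / μ ^ p' * ((b - a) ^ (p' * lam) + pVar p ω a b ^ p') := by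
    intro a b hab
    exact mul_nonneg (div_nonneg (Real.rpow_nonneg (by norm_num) _) hμp'.le)
      (add_nonneg (Real.rpow_nonneg (by linarith) _) (Real.rpow_nonneg (hpVar_nn a b hab) _))
  constructor
  · intro T hT
    have h0A : 0 ∈ {n : ℕ | τ n ≤ T} := by simp [Set.mem_setOf_eq, hτ0, hT.le]
    have hbddA : BddAbove {n : ℕ | τ n ≤ T} := by
      refine ⟨⌈2 ^ (p'-1) * ((T - 0) ^ (p'*lam) + pVar p ω 0 T ^ p') / μ ^ p'⌉₊, fun n hn => ?_⟩
      have h := key 0 T 0 n (Nat.zero_le n) (le_of_eq hτ0.symm) hn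
      have h' : (n:ℝ) ≤ 2 ^ (p'-1) * ((T - 0) ^ (p'*lam) + pVar p ω 0 T ^ p') / μ ^ p' := by
        rw [le_div_iff₀ hμp']
        simpa using h
      exact Nat.cast_le.mp (h'.trans (Nat.le_ceil _))
    have hNA : sSup {n : ℕ | τ n ≤ T} ∈ {n : ℕ | τ n ≤ T} := Nat.sSup_mem ⟨0, h0A⟩ hbddA
    have h := key 0 T 0 (sSup {n : ℕ | τ n ≤ T}) (Nat.zero_le _) (le_of_eq hτ0.symm) hNA
    rw [div_mul_eq_mul_div, le_div_iff₀ hμp']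
    simpa using h
  · intro a b ha hab
    have hrhs := rhs_nonneg a b hab.le
    by_cases hbddA : BddAbove {n : ℕ | τ n ≤ b}
    · have h0A : 0 ∈ {n : ℕ | τ n ≤ b} := by
        simp only [Set.mem_setOf_eq, hτ0]
        linarith
      have hNA : sSup {n : ℕ | τ n ≤ b} ∈ {n : ℕ | τ n ≤ b} := Nat.sSup_mem ⟨0, h0A⟩ hbddA
      have hBne : {n : ℕ | a ≤ τ n}.Nonempty := by
        refine ⟨sSup {n : ℕ | τ n ≤ b} + 1, ?_⟩
        have hnotA : sSup {n : ℕ | τ n ≤ b} + 1 ∉ {n : ℕ | τ n ≤ b} := fun h => by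
          have := le_csSup hbddA h
          omega
        have : ¬ τ (sSup {n : ℕ | τ n ≤ b} + 1) ≤ b := hnotA
        simp only [Set.mem_setOf_eq]
        linarith
      have hMB : sInf {n : ℕ | a ≤ τ n} ∈ {n : ℕ | a ≤ τ n} := Nat.sInf_mem hBne
      rcases le_or_gt (sInf {n : ℕ | a ≤ τ n}) (sSup {n : ℕ | τ n ≤ b}) with hMN | hMN
      · have h := key a b (sInf {n : ℕ | a ≤ τ n}) (sSup {n : ℕ | τ n ≤ b}) hMN hMB hNA
        rw [div_mul_eq_mul_div, le_div_iff₀ hμp']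
        exact h
      · have hc : ((sSup {n : ℕ | τ n ≤ b} : ℕ) : ℝ) ≤ ((sInf {n : ℕ | a ≤ τ n} : ℕ) : ℝ) := by
          exact_mod_cast hMN.le
        linarith
    · rw [csSup_of_not_bddAbove hbddA, csSup_empty]
      have := Nat.cast_nonneg (α := ℝ) (sInf {n : ℕ | a ≤ τ n})
      simp only [Nat.bot_eq_zero, Nat.cast_zero]
      linarith
end
end

section
/- Assume hypothesis (H1). Then for all 0 ≤ s < t ≤ T, all N ≥ 0, and all x_1, x_2, x_3, x_4 ∈ ℝ^d with |x_i| ≤ N (i = 1,2,3,4), one has |g(s,x_1) − g(s,x_3) − g(t,x_2) + g(t,x_4)| ≤ L_g|x_1 − x_2 − x_3 + x_4| + |x_2 − x_4|·h(s,t)^β + M_N|x_2 − x_4|·(|x_1 − x_2|^δ + |x_3 − x_4|^δ). -/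
open scoped BigOperators
open Set

noncomputable section

/-!
Join `x₃` to `x₁` and `x₄` to `x₂` by the segments `u r`, `v r` and apply the mean value
inequality to `r ↦ g(s, u r) - g(t, v r)`. Its derivative splits as
`Dg(s, u) (x₁ - x₂ - x₃ + x₄) + (Dg(s, u) - Dg(t, v)) (x₂ - x₄)`: the first term is controlled
by the Lipschitz constant, the second by the time regularity of `Dg` and its spatial Hölder
continuity, since `‖u r - v r‖ ≤ max ‖x₁ - x₂‖ ‖x₃ - x₄‖`.
-/

open AffineMap

section FourPoint

variable {E F : Type*} [NormedAddCommGroup E] [NormedSpace ℝ E]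
  [NormedAddCommGroup F] [NormedSpace ℝ F]

theorem norm_lineMap_le_max (a b : E) {r : ℝ} (hr : r ∈ Icc (0 : ℝ) 1) :
    ‖lineMap a b r‖ ≤ max ‖a‖ ‖b‖ := by
  have hmem : lineMap a b r ∈ Metric.closedBall (0 : E) (max ‖a‖ ‖b‖) :=
    (convex_closedBall _ _).segment_subset (by simp) (by simp) (lineMap_mem_segment ℝ a b hr)
  simpa using hmem

theorem norm_lineMap_sub_lineMap_rpow_le (a b c e : E) {r δ : ℝ} (hr : r ∈ Icc (0 : ℝ) 1)
    (hδ : 0 ≤ δ) : ‖lineMap a b r - lineMap c e r‖ ^ δ ≤ ‖a - c‖ ^ δ + ‖b - e‖ ^ δ := by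
  rw [← vsub_eq_sub, lineMap_vsub_lineMap]
  calc ‖lineMap (a - c) (b - e) r‖ ^ δ ≤ max ‖a - c‖ ‖b - e‖ ^ δ :=
        Real.rpow_le_rpow (norm_nonneg _) (norm_lineMap_le_max _ _ hr) hδ
    _ = max (‖a - c‖ ^ δ) (‖b - e‖ ^ δ) := Real.rpow_max (norm_nonneg _) (norm_nonneg _) hδ
    _ ≤ ‖a - c‖ ^ δ + ‖b - e‖ ^ δ := max_le_add_of_nonneg (by positivity) (by positivity)

theorem ContinuousLinearMap.norm_apply_sub_apply_le (A B : E →L[ℝ] F) (a b : E) :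
    ‖A a - B b‖ ≤ ‖A‖ * ‖a - b‖ + ‖A - B‖ * ‖b‖ := by
  calc ‖A a - B b‖ = ‖A (a - b) + (A - B) b‖ := by
        rw [map_sub, sub_apply]; abel_nf
    _ ≤ ‖A‖ * ‖a - b‖ + ‖A - B‖ * ‖b‖ :=
        (norm_add_le _ _).trans (add_le_add (A.le_opNorm _) ((A - B).le_opNorm _))

theorem norm_sub_sub_sub_add_le_of_hasFDerivAt {f₁ f₂ : E → F} {f₁' f₂' : E → E →L[ℝ] F}
    (hf₁ : ∀ x, HasFDerivAt f₁ (f₁' x) x) (hf₂ : ∀ x, HasFDerivAt f₂ (f₂' x) x)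
    (x₁ x₂ x₃ x₄ : E) {L K : ℝ}
    (hL : ∀ r ∈ Icc (0 : ℝ) 1, ‖f₁' (lineMap x₃ x₁ r)‖ ≤ L)
    (hK : ∀ r ∈ Icc (0 : ℝ) 1, ‖f₁' (lineMap x₃ x₁ r) - f₂' (lineMap x₄ x₂ r)‖ ≤ K) :
    ‖f₁ x₁ - f₁ x₃ - f₂ x₂ + f₂ x₄‖ ≤ L * ‖x₁ - x₂ - x₃ + x₄‖ + K * ‖x₂ - x₄‖ := by
  set u : ℝ → E := fun r => lineMap x₃ x₁ r
  set v : ℝ → E := fun r => lineMap x₄ x₂ r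
  have hderiv : ∀ r, HasDerivAt (fun r => f₁ (u r) - f₂ (v r))
      (f₁' (u r) (x₁ - x₃) - f₂' (v r) (x₂ - x₄)) r := fun r =>
    ((hf₁ (u r)).comp_hasDerivAt r hasDerivAt_lineMap).sub
      ((hf₂ (v r)).comp_hasDerivAt r hasDerivAt_lineMap)
  have hbound : ∀ r ∈ Ico (0 : ℝ) 1,
      ‖f₁' (u r) (x₁ - x₃) - f₂' (v r) (x₂ - x₄)‖ ≤ L * ‖x₁ - x₂ - x₃ + x₄‖ + K * ‖x₂ - x₄‖ := by
    intro r hr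
    have hsub : x₁ - x₃ - (x₂ - x₄) = x₁ - x₂ - x₃ + x₄ := by abel
    refine ((f₁' (u r)).norm_apply_sub_apply_le _ _ _).trans ?_
    rw [hsub]
    gcongr
    exacts [hL r (Ico_subset_Icc_self hr), hK r (Ico_subset_Icc_self hr)]
  have hmvt := norm_image_sub_le_of_norm_deriv_le_segment_01'
    (fun r _ => (hderiv r).hasDerivWithinAt) hbound
  have hends : f₁ (u 1) - f₂ (v 1) - (f₁ (u 0) - f₂ (v 0)) = f₁ x₁ - f₁ x₃ - f₂ x₂ + f₂ x₄ := by
    simp only [u, v, lineMap_apply_one, lineMap_apply_zero]; abel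
  rwa [hends] at hmvt

end FourPoint

theorem stmt7_general {d m : ℕ} (T : ℝ)
    (g : ℝ → Ed d → (Ed m →L[ℝ] Ed d))
    (Dg : ℝ → Ed d → (Ed d →L[ℝ] Ed m →L[ℝ] Ed d))
    (hDg : ∀ t ∈ Set.Icc (0:ℝ) T, ∀ x : Ed d, HasFDerivAt (g t) (Dg t x) x)
    (β δ Lg : ℝ) (hδ0 : 0 < δ) (hLg : 0 < Lg)
    (h : ℝ → ℝ → ℝ)
    (MN : ℝ → ℝ) (hMN : ∀ N : ℝ, 0 ≤ N → 0 < MN N)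
    (H1i : ∀ t ∈ Set.Icc (0:ℝ) T, ∀ x y : Ed d, ‖g t x - g t y‖ ≤ Lg * ‖x - y‖)
    (H1ii : ∀ N : ℝ, 0 ≤ N → ∀ t ∈ Set.Icc (0:ℝ) T, ∀ x y : Ed d, ‖x‖ ≤ N → ‖y‖ ≤ N →
      ‖Dg t x - Dg t y‖ ≤ MN N * ‖x - y‖ ^ δ)
    (H1iii : ∀ s t : ℝ, 0 ≤ s → s < t → t ≤ T → ∀ x : Ed d,
      ‖g t x - g s x‖ + ‖Dg t x - Dg s x‖ ≤ h s t ^ β) :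
    ∀ s t : ℝ, 0 ≤ s → s < t → t ≤ T → ∀ N : ℝ, 0 ≤ N →
      ∀ x1 x2 x3 x4 : Ed d, ‖x1‖ ≤ N → ‖x2‖ ≤ N → ‖x3‖ ≤ N → ‖x4‖ ≤ N →
      ‖g s x1 - g s x3 - g t x2 + g t x4‖ ≤
        Lg * ‖x1 - x2 - x3 + x4‖ + ‖x2 - x4‖ * h s t ^ β +
          MN N * ‖x2 - x4‖ * (‖x1 - x2‖ ^ δ + ‖x3 - x4‖ ^ δ) := by
  intro s t hs hst htT N hN x1 x2 x3 x4 hx1 hx2 hx3 hx4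
  have hsI : s ∈ Icc (0 : ℝ) T := ⟨hs, (hst.trans_le htT).le⟩
  have htI : t ∈ Icc (0 : ℝ) T := ⟨hs.trans hst.le, htT⟩
  have hDg_le : ∀ x, ‖Dg s x‖ ≤ Lg := fun x =>
    (hDg s hsI x).le_of_lip' hLg.le (Filter.Eventually.of_forall fun y => H1i s hsI y x)
  have hK : ∀ r ∈ Icc (0 : ℝ) 1, ‖Dg s (lineMap x3 x1 r) - Dg t (lineMap x4 x2 r)‖ ≤
      h s t ^ β + MN N * (‖x1 - x2‖ ^ δ + ‖x3 - x4‖ ^ δ) := by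
    intro r hr
    set u : Ed d := lineMap x3 x1 r
    set v : Ed d := lineMap x4 x2 r
    have htime : ‖Dg s u - Dg t u‖ ≤ h s t ^ β := by
      rw [norm_sub_rev (Dg s u) (Dg t u)]
      exact (le_add_of_nonneg_left (norm_nonneg _)).trans (H1iii s t hs hst htT u)
    have hspace : ‖Dg t u - Dg t v‖ ≤ MN N * ‖u - v‖ ^ δ :=
      H1ii N hN t htI u v ((norm_lineMap_le_max x3 x1 hr).trans (max_le hx3 hx1))
        ((norm_lineMap_le_max x4 x2 hr).trans (max_le hx4 hx2))
    have hholder : ‖u - v‖ ^ δ ≤ ‖x1 - x2‖ ^ δ + ‖x3 - x4‖ ^ δ := by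
      rw [add_comm]; exact norm_lineMap_sub_lineMap_rpow_le x3 x1 x4 x2 hr hδ0.le
    calc ‖Dg s u - Dg t v‖ ≤ ‖Dg s u - Dg t u‖ + ‖Dg t u - Dg t v‖ :=
          norm_sub_le_norm_sub_add_norm_sub (Dg s u) (Dg t u) (Dg t v)
      _ ≤ h s t ^ β + MN N * ‖u - v‖ ^ δ := add_le_add htime hspace
      _ ≤ h s t ^ β + MN N * (‖x1 - x2‖ ^ δ + ‖x3 - x4‖ ^ δ) := by
          have := (hMN N hN).le
          gcongr
  calc _ ≤ Lg * ‖x1 - x2 - x3 + x4‖ +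
        (h s t ^ β + MN N * (‖x1 - x2‖ ^ δ + ‖x3 - x4‖ ^ δ)) * ‖x2 - x4‖ :=
        norm_sub_sub_sub_add_le_of_hasFDerivAt (hDg s hsI) (hDg t htI) x1 x2 x3 x4
          (fun r _ => hDg_le _) hK
    _ = _ := by ring

/-- Lemma `lemma2`(ii): under hypothesis (H1), for `s < t` in `[0,T]` and
`x₁,x₂,x₃,x₄` of norm `≤ N`,
`‖g(s,x₁) - g(s,x₃) - g(t,x₂) + g(t,x₄)‖ ≤ L_g ‖x₁-x₂-x₃+x₄‖ + ‖x₂-x₄‖ h(s,t)^β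
 + M_N ‖x₂-x₄‖ (‖x₁-x₂‖^δ + ‖x₃-x₄‖^δ)`. -/
theorem stmt7 {d m : ℕ} (T : ℝ) (hT : 0 < T)
    (g : ℝ → Ed d → (Ed m →L[ℝ] Ed d))
    (hg : ContinuousOn (fun pr : ℝ × Ed d => g pr.1 pr.2) (Set.Icc 0 T ×ˢ Set.univ))
    (Dg : ℝ → Ed d → (Ed d →L[ℝ] Ed m →L[ℝ] Ed d))
    (hDg : ∀ t ∈ Set.Icc (0:ℝ) T, ∀ x : Ed d, HasFDerivAt (g t) (Dg t x) x)
    (β δ Lg : ℝ) (hβ0 : 0 < β) (hβ1 : β ≤ 1) (hδ0 : 0 < δ) (hδ1 : δ ≤ 1) (hLg : 0 < Lg)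
    (h : ℝ → ℝ → ℝ) (hctrl : IsControlOn 0 T h)
    (MN : ℝ → ℝ) (hMN : ∀ N : ℝ, 0 ≤ N → 0 < MN N)
    (H1i : ∀ t ∈ Set.Icc (0:ℝ) T, ∀ x y : Ed d, ‖g t x - g t y‖ ≤ Lg * ‖x - y‖)
    (H1ii : ∀ N : ℝ, 0 ≤ N → ∀ t ∈ Set.Icc (0:ℝ) T, ∀ x y : Ed d, ‖x‖ ≤ N → ‖y‖ ≤ N →
      ‖Dg t x - Dg t y‖ ≤ MN N * ‖x - y‖ ^ δ)
    (H1iii : ∀ s t : ℝ, 0 ≤ s → s < t → t ≤ T → ∀ x : Ed d,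
      ‖g t x - g s x‖ + ‖Dg t x - Dg s x‖ ≤ h s t ^ β) :
    ∀ s t : ℝ, 0 ≤ s → s < t → t ≤ T → ∀ N : ℝ, 0 ≤ N →
      ∀ x1 x2 x3 x4 : Ed d, ‖x1‖ ≤ N → ‖x2‖ ≤ N → ‖x3‖ ≤ N → ‖x4‖ ≤ N →
      ‖g s x1 - g s x3 - g t x2 + g t x4‖ ≤
        Lg * ‖x1 - x2 - x3 + x4‖ + ‖x2 - x4‖ * h s t ^ β +
          MN N * ‖x2 - x4‖ * (‖x1 - x2‖ ^ δ + ‖x3 - x4‖ ^ δ) :=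
  stmt7_general T g Dg hDg β δ Lg hδ0 hLg h MN hMN H1i H1ii H1iii
end
end

section
/- Assume hypotheses (H1)–(H3), let q0, q be chosen with 1 − 1/p < 1/q0 < min{β, δα, δ/p, 1/2} and 1/(q0·δ) ≤ 1/q < min{α, 1/p}, and let N ≥ 0. Let [t0,t1] ⊆ [0,T] and let x, y : [t0,t1] → ℝ^d be continuous of finite q-variation with x_{t0} = y_{t0}, ‖x‖_{∞,[t0,t1]} ≤ N and ‖y‖_{∞,[t0,t1]} ≤ N. Then |||g(·,x_·) − g(·,y_·)|||_{q0-var,[t0,t1]} ≤ M'_N · |||x − y|||_{q-var,[t0,t1]} · ( 2 + |||x|||^δ_{q-var,[t0,t1]} + |||y|||^δ_{q-var,[t0,t1]} ), where M'_N := max{L_N, M_N, M} and M := max{L_g, a·T^{1−α}, |g(0,0)| + h(0,T)^β, ‖b‖_{L_{1/(1−α)}}}. -/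
/-!
Split the increment of `t ↦ g(t, x_t) - g(t, y_t)` over `[s, u]` into a time part
`(g_u - g_s)(x_u) - (g_u - g_s)(y_u)`, bounded by `h(s,u)^β ‖x_u - y_u‖` through the time
regularity of `∂ₓg`, and a space part, a second difference of `g_s`, bounded by the mean value
theorem along the segments from `y` to `x` by
`L_g ‖Δ(x - y)‖ + M_N (‖Δx‖^δ + ‖Δy‖^δ) ‖x_s - y_s‖`.
Since `x_{t0} = y_{t0}`, `‖x - y‖_∞ ≤ |||x - y|||_{q-var}`. Summing in `ℓ^{q0}` with Minkowski,
the pieces are controlled by superadditivity of `h` (as `β q0 ≥ 1`) and by the embedding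
`ℓ^q ⊆ ℓ^{q0}` (as `q ≤ δ q0 ≤ q0`).
-/

open scoped BigOperators
open Set

noncomputable section

open Finset

lemma sum_rpow_le_rpow_sum {ι : Type*} {s : Finset ι} {f : ι → ℝ} (hf : ∀ i ∈ s, 0 ≤ f i) {r : ℝ}
    (hr : 1 ≤ r) : ∑ i ∈ s, f i ^ r ≤ (∑ i ∈ s, f i) ^ r := by
  induction s using Finset.cons_induction with
  | empty => simp [Real.zero_rpow (by linarith : r ≠ 0)]
  | cons j s hj ih =>
    rw [sum_cons, sum_cons]
    have hs := fun i hi => hf i (mem_cons_of_mem hi)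
    calc f j ^ r + ∑ i ∈ s, f i ^ r ≤ f j ^ r + (∑ i ∈ s, f i) ^ r := by gcongr; exact ih hs
      _ ≤ (f j + ∑ i ∈ s, f i) ^ r :=
        Real.add_rpow_le_rpow_add (hf j (mem_cons_self j s)) (sum_nonneg hs) hr

section FinLpNorm

variable {ι : Type*} [Fintype ι]

def finLpNorm (p : ℝ) (f : ι → ℝ) : ℝ :=
  (∑ i, |f i| ^ p) ^ (1 / p)

lemma finLpNorm_nonneg (p : ℝ) (f : ι → ℝ) : 0 ≤ finLpNorm p f := by
  unfold finLpNorm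
  positivity

lemma finLpNorm_add_le {p : ℝ} (hp : 1 ≤ p) (f g : ι → ℝ) :
    finLpNorm p (fun i => f i + g i) ≤ finLpNorm p f + finLpNorm p g :=
  Real.Lp_add_le univ f g hp

lemma finLpNorm_const_mul {p : ℝ} (hp : 0 < p) (c : ℝ) (f : ι → ℝ) :
    finLpNorm p (fun i => c * f i) = |c| * finLpNorm p f := by
  simp only [finLpNorm, abs_mul, Real.mul_rpow (abs_nonneg _) (abs_nonneg _), ← mul_sum]
  rw [Real.mul_rpow (by positivity) (by positivity), ← Real.rpow_mul (abs_nonneg c),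
    mul_one_div_cancel hp.ne', Real.rpow_one]

lemma finLpNorm_mono {p : ℝ} (hp : 0 < p) {f g : ι → ℝ} (hfg : ∀ i, |f i| ≤ |g i|) :
    finLpNorm p f ≤ finLpNorm p g :=
  Real.rpow_le_rpow (by positivity)
    (sum_le_sum fun i _ => Real.rpow_le_rpow (abs_nonneg _) (hfg i) hp.le) (by positivity)

lemma abs_le_finLpNorm {p : ℝ} (hp : 0 < p) (f : ι → ℝ) (i : ι) : |f i| ≤ finLpNorm p f := by
  calc |f i| = (|f i| ^ p) ^ (1 / p) := by
        rw [← Real.rpow_mul (abs_nonneg _), mul_one_div_cancel hp.ne', Real.rpow_one]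
    _ ≤ finLpNorm p f := by
        unfold finLpNorm
        gcongr
        exact single_le_sum (f := fun j => |f j| ^ p) (fun j _ => by positivity) (mem_univ i)

lemma finLpNorm_one_of_nonneg {f : ι → ℝ} (hf : 0 ≤ f) : finLpNorm 1 f = ∑ i, f i := by
  simp [finLpNorm, abs_of_nonneg (hf _)]

lemma finLpNorm_rpow_le {p q c : ℝ} (hq : 0 < q) (hc : 0 < c) (hqc : q ≤ c * p) {f : ι → ℝ}
    (hf : 0 ≤ f) : finLpNorm p (fun i => f i ^ c) ≤ finLpNorm q f ^ c := by
  have hp : 0 < p := pos_of_mul_pos_right (hq.trans_le hqc) hc.le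
  have hr : 1 ≤ c * p / q := (one_le_div hq).mpr hqc
  have hfq : ∀ i, 0 ≤ f i ^ q := fun i => Real.rpow_nonneg (hf i) q
  have hterm : ∀ i, |f i ^ c| ^ p = (f i ^ q) ^ (c * p / q) := fun i => by
    rw [abs_of_nonneg (Real.rpow_nonneg (hf i) c), ← Real.rpow_mul (hf i),
      ← Real.rpow_mul (hf i)]
    field_simp
  simp only [finLpNorm, hterm, abs_of_nonneg (hf _)]
  calc (∑ i, (f i ^ q) ^ (c * p / q)) ^ (1 / p)
      ≤ ((∑ i, f i ^ q) ^ (c * p / q)) ^ (1 / p) :=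
        Real.rpow_le_rpow (sum_nonneg fun i _ => Real.rpow_nonneg (hfq i) _)
          (sum_rpow_le_rpow_sum (fun i _ => hfq i) hr) (one_div_pos.mpr hp).le
    _ = ((∑ i, f i ^ q) ^ (1 / q)) ^ c := by
        have hS : 0 ≤ ∑ i, f i ^ q := sum_nonneg fun i _ => hfq i
        rw [← Real.rpow_mul hS, ← Real.rpow_mul hS]
        field_simp

lemma finLpNorm_anti {p q : ℝ} (hq : 0 < q) (hqp : q ≤ p) (f : ι → ℝ) :
    finLpNorm p f ≤ finLpNorm q f := by
  have := finLpNorm_rpow_le hq one_pos (by linarith : q ≤ 1 * p) (fun i => abs_nonneg (f i))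
  simpa [finLpNorm] using this

end FinLpNorm

section PVariation

variable {E : Type*} [NormedAddCommGroup E]

def IsPartition (a b : ℝ) {n : ℕ} (τ : Fin (n + 1) → ℝ) : Prop :=
  StrictMono τ ∧ τ 0 = a ∧ τ (Fin.last n) = b

lemma IsPartition.mem_Icc {a b : ℝ} {n : ℕ} {τ : Fin (n + 1) → ℝ} (hτ : IsPartition a b τ)
    (j : Fin (n + 1)) : τ j ∈ Icc a b :=
  ⟨hτ.2.1 ▸ hτ.1.monotone (Fin.zero_le j), hτ.2.2 ▸ hτ.1.monotone (Fin.le_last j)⟩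

lemma IsPartition.castSucc_lt_succ {a b : ℝ} {n : ℕ} {τ : Fin (n + 1) → ℝ}
    (hτ : IsPartition a b τ) (i : Fin n) : τ i.castSucc < τ i.succ :=
  hτ.1 i.castSucc_lt_succ

lemma pVar_nonneg (p : ℝ) (x : ℝ → E) (a b : ℝ) : 0 ≤ pVar p x a b := by
  refine Real.rpow_nonneg (Real.sSup_nonneg ?_) _
  rintro v ⟨n, t, -, -, -, rfl⟩
  positivity

lemma finLpNorm_le_pVar {q : ℝ} (hq : 0 < q) {x : ℝ → E} {a b : ℝ} (hx : FinitePVar q x a b)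
    {n : ℕ} {τ : Fin (n + 1) → ℝ} (hτ : IsPartition a b τ) :
    finLpNorm q (fun i : Fin n => ‖x (τ i.succ) - x (τ i.castSucc)‖) ≤ pVar q x a b := by
  simp only [finLpNorm, abs_norm]
  exact Real.rpow_le_rpow (by positivity) (le_csSup hx ⟨n, τ, hτ.1, hτ.2.1, hτ.2.2, rfl⟩)
    (by positivity)

lemma pVar_le_of_forall_isPartition {p R : ℝ} (hp : 0 < p) (hR : 0 ≤ R) {x : ℝ → E} {a b : ℝ}
    (H : ∀ (n : ℕ) (τ : Fin (n + 1) → ℝ), IsPartition a b τ →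
      finLpNorm p (fun i : Fin n => ‖x (τ i.succ) - x (τ i.castSucc)‖) ≤ R) :
    pVar p x a b ≤ R := by
  have hsum : ∀ v ∈ pVarSums p x a b, v ≤ R ^ p := by
    rintro v ⟨n, τ, hτ, h0, hl, rfl⟩
    have hS : 0 ≤ ∑ i : Fin n, ‖x (τ i.succ) - x (τ i.castSucc)‖ ^ p := by positivity
    have := Real.rpow_le_rpow (finLpNorm_nonneg _ _) (H n τ ⟨hτ, h0, hl⟩) hp.le
    simpa only [finLpNorm, abs_norm, ← Real.rpow_mul hS, one_div_mul_cancel hp.ne',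
      Real.rpow_one] using this
  calc pVar p x a b ≤ (R ^ p) ^ (1 / p) :=
        Real.rpow_le_rpow (Real.sSup_nonneg fun v ⟨n, t, _, _, _, hv⟩ => hv ▸ by positivity)
          (Real.sSup_le hsum (by positivity)) (by positivity)
    _ = R := by rw [← Real.rpow_mul hR, mul_one_div_cancel hp.ne', Real.rpow_one]

lemma norm_sub_le_pVar {q : ℝ} (hq : 0 < q) {x : ℝ → E} {a b s : ℝ} (hx : FinitePVar q x a b)
    (hs : s ∈ Icc a b) : ‖x s - x a‖ ≤ pVar q x a b := by
  rcases hs.1.eq_or_lt with rfl | has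
  · simpa using pVar_nonneg q x _ b
  rcases hs.2.eq_or_lt with rfl | hsb
  · have hτ : IsPartition a s ![a, s] := by
      refine ⟨?_, rfl, rfl⟩
      simp [Fin.strictMono_iff_lt_succ, has]
    simpa using (abs_le_finLpNorm hq _ 0).trans (finLpNorm_le_pVar hq hx hτ)
  · have hτ : IsPartition a b ![a, s, b] := by
      refine ⟨?_, rfl, rfl⟩
      simp [Fin.strictMono_iff_lt_succ, Fin.forall_fin_two, has, hsb]
    simpa using (abs_le_finLpNorm hq _ 0).trans (finLpNorm_le_pVar hq hx hτ)

lemma Real.rpow_add_le_two_rpow_mul_add_rpow {a b q : ℝ} (ha : 0 ≤ a) (hb : 0 ≤ b) (hq : 0 ≤ q) :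
    (a + b) ^ q ≤ 2 ^ q * (a ^ q + b ^ q) := by
  calc (a + b) ^ q ≤ (2 * max a b) ^ q := by gcongr; linarith [le_max_left a b, le_max_right a b]
    _ = 2 ^ q * max a b ^ q := Real.mul_rpow zero_le_two (le_max_of_le_left ha)
    _ ≤ 2 ^ q * (a ^ q + b ^ q) := by
        gcongr
        rcases max_cases a b with ⟨h, -⟩ | ⟨h, -⟩ <;> rw [h]
        · exact le_add_of_nonneg_right (by positivity)
        · exact le_add_of_nonneg_left (by positivity)

lemma FinitePVar.sub {q : ℝ} (hq : 0 < q) {x y : ℝ → E} {a b : ℝ} (hx : FinitePVar q x a b)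
    (hy : FinitePVar q y a b) : FinitePVar q (fun t => x t - y t) a b := by
  obtain ⟨Kx, hKx⟩ := hx
  obtain ⟨Ky, hKy⟩ := hy
  refine ⟨2 ^ q * (Kx + Ky), ?_⟩
  rintro v ⟨n, τ, hτ, h0, hl, rfl⟩
  have hterm : ∀ i : Fin n,
      ‖(x (τ i.succ) - y (τ i.succ)) - (x (τ i.castSucc) - y (τ i.castSucc))‖ ^ q ≤
        2 ^ q * (‖x (τ i.succ) - x (τ i.castSucc)‖ ^ q +
          ‖y (τ i.succ) - y (τ i.castSucc)‖ ^ q) := fun i => by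
    refine (Real.rpow_le_rpow (norm_nonneg _) ?_ hq.le).trans
      (Real.rpow_add_le_two_rpow_mul_add_rpow (norm_nonneg _) (norm_nonneg _) hq.le)
    rw [sub_sub_sub_comm]
    exact norm_sub_le _ _
  calc _ ≤ _ := sum_le_sum fun i _ => hterm i
    _ = 2 ^ q * (∑ i : Fin n, ‖x (τ i.succ) - x (τ i.castSucc)‖ ^ q +
          ∑ i : Fin n, ‖y (τ i.succ) - y (τ i.castSucc)‖ ^ q) := by
        rw [← mul_sum, sum_add_distrib]
    _ ≤ 2 ^ q * (Kx + Ky) := by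
        gcongr
        · exact hKx ⟨n, τ, hτ, h0, hl, rfl⟩
        · exact hKy ⟨n, τ, hτ, h0, hl, rfl⟩

end PVariation

namespace IsControlOn

variable {a b : ℝ} {w : ℝ → ℝ → ℝ}

lemma mono (hw : IsControlOn a b w) {a' b' : ℝ} (ha : a ≤ a') (hb : b' ≤ b) :
    IsControlOn a' b' w := by
  obtain ⟨hcont, hdiag, hsuper, hnonneg⟩ := hw
  refine ⟨hcont.mono fun pr hpr => ⟨ha.trans hpr.1, hpr.2.1, hpr.2.2.trans hb⟩,
    fun t h1 h2 => hdiag t (ha.trans h1) (h2.trans hb),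
    fun s t u h1 h2 h3 h4 => hsuper s t u (ha.trans h1) h2 h3 (h4.trans hb),
    fun s t h1 h2 h3 => hnonneg s t (ha.trans h1) h2 (h3.trans hb)⟩

lemma le_of_subset (hw : IsControlOn a b w) {s s' t' t : ℝ} (hs : a ≤ s) (hss' : s ≤ s')
    (hs't' : s' ≤ t') (ht't : t' ≤ t) (ht : t ≤ b) : w s' t' ≤ w s t := by
  have h₁ := hw.2.2.1 s s' t' hs hss' hs't' (ht't.trans ht)
  have h₂ := hw.2.2.1 s t' t hs (hss'.trans hs't') ht't ht
  have h₃ := hw.2.2.2 s s' hs hss' (hs't'.trans (ht't.trans ht))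
  have h₄ := hw.2.2.2 t' t (hs.trans (hss'.trans hs't')) ht't ht
  linarith

lemma sum_le_of_monotone (hw : IsControlOn a b w) {n : ℕ} {τ : Fin (n + 1) → ℝ}
    (hτ : Monotone τ) (ha : a ≤ τ 0) (hb : τ (Fin.last n) ≤ b) :
    ∑ i : Fin n, w (τ i.castSucc) (τ i.succ) ≤ w (τ 0) (τ (Fin.last n)) := by
  induction n with
  | zero => simp [hw.2.1 (τ 0) ha hb]
  | succ n ih =>
    have hτ' : Monotone fun i : Fin (n + 1) => τ i.castSucc :=
      fun i j hij => hτ (Fin.castSucc_le_castSucc_iff.mpr hij)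
    have hmid : τ (Fin.last n).castSucc ≤ τ (Fin.last (n + 1)) := hτ (Fin.le_last _)
    have hinit := ih hτ' ha (hmid.trans hb)
    simp only [← Fin.succ_castSucc, Fin.castSucc_zero] at hinit
    rw [Fin.sum_univ_castSucc, Fin.succ_last]
    linarith [hw.2.2.1 _ _ _ ha (hτ (Fin.zero_le _)) hmid hb]

lemma sum_le (hw : IsControlOn a b w) {n : ℕ} {τ : Fin (n + 1) → ℝ} (hτ : IsPartition a b τ) :
    ∑ i : Fin n, w (τ i.castSucc) (τ i.succ) ≤ w a b := by
  have := hw.sum_le_of_monotone hτ.1.monotone hτ.2.1.ge hτ.2.2.le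
  rwa [hτ.2.1, hτ.2.2] at this

end IsControlOn

section Increments

variable {E F : Type*} [NormedAddCommGroup E] [NormedSpace ℝ E] [NormedAddCommGroup F]
  [NormedSpace ℝ F]

lemma Convex.norm_sub_sub_sub_le_of_holder_fderiv {S : Set E} (hS : Convex ℝ S) {φ : E → F}
    {φ' : E → E →L[ℝ] F} (hφ : ∀ v ∈ S, HasFDerivAt φ (φ' v) v) {L M δ : ℝ}
    (hL : ∀ v ∈ S, ‖φ' v‖ ≤ L) (hM : 0 ≤ M) (hδ : 0 ≤ δ)
    (hH : ∀ v ∈ S, ∀ v' ∈ S, ‖φ' v - φ' v'‖ ≤ M * ‖v - v'‖ ^ δ) {x₀ x₁ y₀ y₁ : E}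
    (hx₀ : x₀ ∈ S) (hx₁ : x₁ ∈ S) (hy₀ : y₀ ∈ S) (hy₁ : y₁ ∈ S) :
    ‖(φ x₁ - φ y₁) - (φ x₀ - φ y₀)‖ ≤
      L * ‖(x₁ - y₁) - (x₀ - y₀)‖ + M * (‖x₁ - x₀‖ + ‖y₁ - y₀‖) ^ δ * ‖x₀ - y₀‖ := by
  set ξ : ℝ → E := fun θ => y₁ + θ • (x₁ - y₁)
  set η : ℝ → E := fun θ => y₀ + θ • (x₀ - y₀)
  have hξη : ∀ θ ∈ Icc (0 : ℝ) 1, ‖ξ θ - η θ‖ ≤ ‖x₁ - x₀‖ + ‖y₁ - y₀‖ := fun θ hθ => by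
    have : ξ θ - η θ = (1 - θ) • (y₁ - y₀) + θ • (x₁ - x₀) := by simp only [ξ, η]; module
    rw [this]
    refine (norm_add_le _ _).trans ?_
    rw [norm_smul_of_nonneg (sub_nonneg.mpr hθ.2), norm_smul_of_nonneg hθ.1]
    nlinarith [norm_nonneg (x₁ - x₀), norm_nonneg (y₁ - y₀), hθ.1, hθ.2]
  have hderiv : ∀ θ ∈ Icc (0 : ℝ) 1, HasDerivWithinAt (fun θ => φ (ξ θ) - φ (η θ))
      (φ' (ξ θ) (x₁ - y₁) - φ' (η θ) (x₀ - y₀)) (Icc 0 1) θ := fun θ hθ => by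
    have hline : ∀ c v : E, HasDerivAt (fun θ : ℝ => c + θ • v) v θ := fun c v => by
      simpa using ((hasDerivAt_id θ).smul_const v).const_add c
    exact ((hφ _ (hS.add_smul_sub_mem hy₁ hx₁ hθ)).comp_hasDerivAt θ (hline _ _)).sub
      ((hφ _ (hS.add_smul_sub_mem hy₀ hx₀ hθ)).comp_hasDerivAt θ (hline _ _))
      |>.hasDerivWithinAt
  have hbound : ∀ θ ∈ Ico (0 : ℝ) 1, ‖φ' (ξ θ) (x₁ - y₁) - φ' (η θ) (x₀ - y₀)‖ ≤
      L * ‖(x₁ - y₁) - (x₀ - y₀)‖ + M * (‖x₁ - x₀‖ + ‖y₁ - y₀‖) ^ δ * ‖x₀ - y₀‖ :=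
    fun θ hθ => by
    have hθ' : θ ∈ Icc (0 : ℝ) 1 := Ico_subset_Icc_self hθ
    have hξ : ξ θ ∈ S := hS.add_smul_sub_mem hy₁ hx₁ hθ'
    have hη : η θ ∈ S := hS.add_smul_sub_mem hy₀ hx₀ hθ'
    have hsplit : φ' (ξ θ) (x₁ - y₁) - φ' (η θ) (x₀ - y₀) =
        φ' (ξ θ) ((x₁ - y₁) - (x₀ - y₀)) + (φ' (ξ θ) - φ' (η θ)) (x₀ - y₀) := by
      simp only [map_sub, sub_apply]
      abel
    rw [hsplit]
    refine (norm_add_le _ _).trans (add_le_add ?_ ?_)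
    · exact (ContinuousLinearMap.le_opNorm _ _).trans
        (mul_le_mul_of_nonneg_right (hL _ hξ) (norm_nonneg _))
    · refine (ContinuousLinearMap.le_opNorm _ _).trans
        (mul_le_mul_of_nonneg_right ((hH _ hξ _ hη).trans ?_) (norm_nonneg _))
      gcongr
      exact hξη θ hθ'
  have := norm_image_sub_le_of_norm_deriv_le_segment_01' hderiv hbound
  simp only [ξ, η, one_smul, zero_smul, add_zero, add_sub_cancel] at this
  rwa [sub_sub_sub_comm]

lemma norm_sub_sub_sub_le_of_time_control {g : ℝ → E → F} {Dg : ℝ → E → E →L[ℝ] F}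
    {a b L M N β δ : ℝ} {w : ℝ → ℝ → ℝ}
    (hDg : ∀ t ∈ Icc a b, ∀ v, HasFDerivAt (g t) (Dg t v) v) (hL : 0 ≤ L)
    (hLip : ∀ t ∈ Icc a b, ∀ v v', ‖g t v - g t v'‖ ≤ L * ‖v - v'‖) (hM : 0 ≤ M)
    (hHol : ∀ t ∈ Icc a b, ∀ v v', ‖v‖ ≤ N → ‖v'‖ ≤ N → ‖Dg t v - Dg t v'‖ ≤ M * ‖v - v'‖ ^ δ)
    (hδ₀ : 0 ≤ δ) (hδ₁ : δ ≤ 1)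
    (htime : ∀ s t, a ≤ s → s < t → t ≤ b → ∀ v, ‖Dg t v - Dg s v‖ ≤ w s t ^ β)
    {s u : ℝ} (hs : s ∈ Icc a b) (hu : u ∈ Icc a b) (hsu : s < u) {x₀ x₁ y₀ y₁ : E}
    (hx₀ : ‖x₀‖ ≤ N) (hx₁ : ‖x₁‖ ≤ N) (hy₀ : ‖y₀‖ ≤ N) (hy₁ : ‖y₁‖ ≤ N) :
    ‖(g u x₁ - g u y₁) - (g s x₀ - g s y₀)‖ ≤ w s u ^ β * ‖x₁ - y₁‖ +
      L * ‖(x₁ - y₁) - (x₀ - y₀)‖ + M * (‖x₁ - x₀‖ ^ δ + ‖y₁ - y₀‖ ^ δ) * ‖x₀ - y₀‖ := by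
  have htime_part : ‖(g u x₁ - g u y₁) - (g s x₁ - g s y₁)‖ ≤ w s u ^ β * ‖x₁ - y₁‖ := by
    rw [sub_sub_sub_comm]
    exact convex_univ.norm_image_sub_le_of_norm_hasFDerivWithin_le
      (fun v _ => ((hDg u hu v).sub (hDg s hs v)).hasFDerivWithinAt)
      (fun v _ => htime s u hs.1 hsu hu.2 v) (mem_univ _) (mem_univ _)
  have hball : ∀ v : E, ‖v‖ ≤ N ↔ v ∈ Metric.closedBall 0 N := fun v => mem_closedBall_zero_iff.symm
  have hspace_part : ‖(g s x₁ - g s y₁) - (g s x₀ - g s y₀)‖ ≤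
      L * ‖(x₁ - y₁) - (x₀ - y₀)‖ + M * (‖x₁ - x₀‖ + ‖y₁ - y₀‖) ^ δ * ‖x₀ - y₀‖ :=
    (convex_closedBall 0 N).norm_sub_sub_sub_le_of_holder_fderiv (fun v _ => hDg s hs v)
      (fun v _ => (hDg s hs v).le_of_lip' hL (.of_forall fun v' => hLip s hs v' v)) hM hδ₀
      (fun v hv v' hv' => hHol s hs v v' ((hball v).mpr hv) ((hball v').mpr hv'))
      ((hball _).mp hx₀) ((hball _).mp hx₁) ((hball _).mp hy₀) ((hball _).mp hy₁)
  have hsubadd : (‖x₁ - x₀‖ + ‖y₁ - y₀‖) ^ δ ≤ ‖x₁ - x₀‖ ^ δ + ‖y₁ - y₀‖ ^ δ :=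
    Real.rpow_add_le_add_rpow (norm_nonneg _) (norm_nonneg _) hδ₀ hδ₁
  calc ‖(g u x₁ - g u y₁) - (g s x₀ - g s y₀)‖
      ≤ ‖(g u x₁ - g u y₁) - (g s x₁ - g s y₁)‖ + ‖(g s x₁ - g s y₁) - (g s x₀ - g s y₀)‖ :=
        norm_sub_le_norm_sub_add_norm_sub _ _ _
    _ ≤ _ := by
        refine (add_le_add htime_part hspace_part).trans ?_
        rw [← add_assoc]
        gcongr

lemma pVar_sub_comp_le {g : ℝ → E → F} {Dg : ℝ → E → E →L[ℝ] F}
    {a b L M N β δ : ℝ} {w : ℝ → ℝ → ℝ}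
    (hDg : ∀ t ∈ Icc a b, ∀ v, HasFDerivAt (g t) (Dg t v) v) (hL : 0 ≤ L)
    (hLip : ∀ t ∈ Icc a b, ∀ v v', ‖g t v - g t v'‖ ≤ L * ‖v - v'‖) (hM : 0 ≤ M)
    (hHol : ∀ t ∈ Icc a b, ∀ v v', ‖v‖ ≤ N → ‖v'‖ ≤ N → ‖Dg t v - Dg t v'‖ ≤ M * ‖v - v'‖ ^ δ)
    (hδ₀ : 0 < δ) (hδ₁ : δ ≤ 1) (hβ : 0 < β) (hw : IsControlOn a b w)
    (htime : ∀ s t, a ≤ s → s < t → t ≤ b → ∀ v, ‖Dg t v - Dg s v‖ ≤ w s t ^ β)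
    (hab : a ≤ b) {p q : ℝ} (hp : 1 ≤ p) (hq : 0 < q) (hqδ : q ≤ δ * p) (hβp : 1 ≤ β * p)
    {x y : ℝ → E} (hx : FinitePVar q x a b) (hy : FinitePVar q y a b) (hxy : x a = y a)
    (hxN : ∀ t ∈ Icc a b, ‖x t‖ ≤ N) (hyN : ∀ t ∈ Icc a b, ‖y t‖ ≤ N) :
    pVar p (fun t => g t (x t) - g t (y t)) a b ≤ pVar q (fun t => x t - y t) a b *
      (w a b ^ β + L + M * (pVar q x a b ^ δ + pVar q y a b ^ δ)) := by
  set Z := pVar q (fun t => x t - y t) a b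
  set X := pVar q x a b
  set Y := pVar q y a b
  have hp₀ : 0 < p := one_pos.trans_le hp
  have hZ : 0 ≤ Z := pVar_nonneg _ _ _ _
  have hX : 0 ≤ X := pVar_nonneg _ _ _ _
  have hY : 0 ≤ Y := pVar_nonneg _ _ _ _
  have hwab : 0 ≤ w a b := hw.2.2.2 a b le_rfl hab le_rfl
  have hz : FinitePVar q (fun t => x t - y t) a b := hx.sub hq hy
  have hzZ : ∀ t ∈ Icc a b, ‖x t - y t‖ ≤ Z := fun t ht => by
    simpa [hxy] using norm_sub_le_pVar hq hz ht
  refine pVar_le_of_forall_isPartition hp₀ (by positivity) fun n τ hτ => ?_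
  set Δw : Fin n → ℝ := fun i =>
    ‖(g (τ i.succ) (x (τ i.succ)) - g (τ i.succ) (y (τ i.succ))) -
      (g (τ i.castSucc) (x (τ i.castSucc)) - g (τ i.castSucc) (y (τ i.castSucc)))‖
  set Δz : Fin n → ℝ := fun i =>
    ‖(x (τ i.succ) - y (τ i.succ)) - (x (τ i.castSucc) - y (τ i.castSucc))‖
  set Δx : Fin n → ℝ := fun i => ‖x (τ i.succ) - x (τ i.castSucc)‖
  set Δy : Fin n → ℝ := fun i => ‖y (τ i.succ) - y (τ i.castSucc)‖
  set ω : Fin n → ℝ := fun i => w (τ i.castSucc) (τ i.succ)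
  have hω : 0 ≤ ω := fun i =>
    hw.2.2.2 _ _ (hτ.mem_Icc _).1 (hτ.castSucc_lt_succ i).le (hτ.mem_Icc _).2
  have hincr : ∀ i, |Δw i| ≤
      |Z * ω i ^ β + L * Δz i + (M * Z) * Δx i ^ δ + (M * Z) * Δy i ^ δ| := fun i => by
    have hs := hτ.mem_Icc i.castSucc
    have hu := hτ.mem_Icc i.succ
    have := hzZ _ hs
    have := hzZ _ hu
    have : 0 ≤ ω i ^ β := Real.rpow_nonneg (hω i) β
    have : 0 ≤ Δx i ^ δ + Δy i ^ δ := by positivity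
    rw [abs_of_nonneg (norm_nonneg _), abs_of_nonneg (by positivity)]
    refine (norm_sub_sub_sub_le_of_time_control hDg hL hLip hM hHol hδ₀.le hδ₁ htime hs hu
      (hτ.castSucc_lt_succ i) (hxN _ hs) (hxN _ hu) (hyN _ hs) (hyN _ hu)).trans ?_
    calc _ ≤ ω i ^ β * Z + L * Δz i + M * (Δx i ^ δ + Δy i ^ δ) * Z := by gcongr
      _ = _ := by ring
  have hωβ : finLpNorm p (fun i => ω i ^ β) ≤ w a b ^ β := by
    refine (finLpNorm_rpow_le one_pos hβ hβp hω).trans ?_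
    rw [finLpNorm_one_of_nonneg hω]
    exact Real.rpow_le_rpow (sum_nonneg fun i _ => hω i) (hw.sum_le hτ) hβ.le
  have hΔz : finLpNorm p Δz ≤ Z :=
    (finLpNorm_anti hq (by nlinarith) _).trans (finLpNorm_le_pVar hq hz hτ)
  have hpow : ∀ {v : ℝ → E}, FinitePVar q v a b →
      finLpNorm p (fun i : Fin n => ‖v (τ i.succ) - v (τ i.castSucc)‖ ^ δ) ≤ pVar q v a b ^ δ :=
    fun hv => (finLpNorm_rpow_le hq hδ₀ hqδ fun i => norm_nonneg _).trans
      (Real.rpow_le_rpow (finLpNorm_nonneg _ _) (finLpNorm_le_pVar hq hv hτ) hδ₀.le)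
  calc finLpNorm p Δw
      ≤ finLpNorm p fun i => Z * ω i ^ β + L * Δz i + (M * Z) * Δx i ^ δ + (M * Z) * Δy i ^ δ :=
        finLpNorm_mono hp₀ hincr
    _ ≤ Z * finLpNorm p (fun i => ω i ^ β) + L * finLpNorm p Δz +
          (M * Z) * finLpNorm p (fun i => Δx i ^ δ) + (M * Z) * finLpNorm p (fun i => Δy i ^ δ) := by
        refine (finLpNorm_add_le hp _ _).trans (add_le_add ((finLpNorm_add_le hp _ _).trans
          (add_le_add (finLpNorm_add_le hp _ _) le_rfl)) le_rfl) |>.trans_eq ?_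
        simp only [finLpNorm_const_mul hp₀, abs_of_nonneg hZ, abs_of_nonneg hL,
          abs_of_nonneg (mul_nonneg hM hZ)]
    _ ≤ Z * w a b ^ β + L * Z + (M * Z) * X ^ δ + (M * Z) * Y ^ δ := by
        gcongr
        exacts [hpow hx, hpow hy]
    _ = Z * (w a b ^ β + L + M * (X ^ δ + Y ^ δ)) := by ring

end Increments

theorem stmt8_general
    {d m : ℕ} (p T : ℝ) (hp1 : 1 < p)
    (g : ℝ → Ed d → (Ed m →L[ℝ] Ed d))
    (Dg : ℝ → Ed d → (Ed d →L[ℝ] Ed m →L[ℝ] Ed d))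
    (hDg : ∀ t ∈ Set.Icc (0:ℝ) T, ∀ x : Ed d, HasFDerivAt (g t) (Dg t x) x)
    (β δ Lg : ℝ) (hβ0 : 0 < β) (hδ0 : 0 < δ) (hδ1 : δ ≤ 1) (hLg : 0 < Lg)
    (h : ℝ → ℝ → ℝ) (hctrl : IsControlOn 0 T h)
    (MN : ℝ → ℝ) (hMN : ∀ N : ℝ, 0 ≤ N → 0 < MN N)
    (H1i : ∀ t ∈ Set.Icc (0:ℝ) T, ∀ x y : Ed d, ‖g t x - g t y‖ ≤ Lg * ‖x - y‖)
    (H1ii : ∀ N : ℝ, 0 ≤ N → ∀ t ∈ Set.Icc (0:ℝ) T, ∀ x y : Ed d, ‖x‖ ≤ N → ‖y‖ ≤ N →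
      ‖Dg t x - Dg t y‖ ≤ MN N * ‖x - y‖ ^ δ)
    (H1iii : ∀ s t : ℝ, 0 ≤ s → s < t → t ≤ T → ∀ x : Ed d,
      ‖g t x - g s x‖ + ‖Dg t x - Dg s x‖ ≤ h s t ^ β)
    (a α : ℝ) (b : ℝ → ℝ)
    (LN : ℝ → ℝ)
    (q0 q : ℝ)
    (hq0a : 1 - 1 / p < 1 / q0)
    (hq0b : 1 / q0 < min (min β (δ * α)) (min (δ / p) (1 / 2)))
    (hqa : 1 / (q0 * δ) ≤ 1 / q)
    (t0 t1 : ℝ) (ht0 : 0 ≤ t0) (ht01 : t0 ≤ t1) (ht1 : t1 ≤ T)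
    (N : ℝ) (hN : 0 ≤ N)
    (x y : ℝ → Ed d)
    (hxq : FinitePVar q x t0 t1)
    (hyq : FinitePVar q y t0 t1)
    (hxy0 : x t0 = y t0)
    (hxN : ∀ t ∈ Set.Icc t0 t1, ‖x t‖ ≤ N) (hyN : ∀ t ∈ Set.Icc t0 t1, ‖y t‖ ≤ N) :
    pVar q0 (fun t => g t (x t) - g t (y t)) t0 t1 ≤
      max (max (LN N) (MN N)) (max (max Lg (a * T ^ (1 - α))) (max (‖g 0 0‖ + h 0 T ^ β) ((∫ s in (0:ℝ)..T, |b s| ^ (1 / (1 - α))) ^ (1 - α)))) *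
        pVar q (fun t => x t - y t) t0 t1 *
        (2 + pVar q x t0 t1 ^ δ + pVar q y t0 t1 ^ δ) := by
  have hq0 : 0 < 1 / q0 := (sub_pos.mpr ((div_lt_one (by linarith)).mpr hp1)).trans hq0a
  have hq0β : 1 / q0 < β := hq0b.trans_le ((min_le_left _ _).trans (min_le_left _ _))
  have hq0two : 1 / q0 < 1 / 2 := hq0b.trans_le ((min_le_right _ _).trans (min_le_right _ _))
  have hq0pos : 0 < q0 := one_div_pos.mp hq0
  have hqpos : 0 < q := one_div_pos.mp ((one_div_pos.mpr (mul_pos hq0pos hδ0)).trans_le hqa)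
  have hq0one : 1 ≤ q0 := by
    have := (one_div_lt_one_div hq0pos two_pos).mp hq0two
    linarith
  have hβq0 : 1 ≤ β * q0 := by
    have := (div_lt_iff₀ hq0pos).mp hq0β
    linarith
  have hqδ : q ≤ δ * q0 := by
    have := (one_div_le_one_div (mul_pos hq0pos hδ0) hqpos).mp hqa
    linarith
  have hIcc : Icc t0 t1 ⊆ Icc 0 T := Icc_subset_Icc ht0 ht1
  have hbound := pVar_sub_comp_le (fun t ht => hDg t (hIcc ht)) hLg.le
    (fun t ht => H1i t (hIcc ht)) (hMN N hN).le (fun t ht => H1ii N hN t (hIcc ht)) hδ0 hδ1 hβ0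
    (hctrl.mono ht0 ht1)
    (fun s t hs hst ht v => (le_add_of_nonneg_left (norm_nonneg _)).trans
      (H1iii s t (ht0.trans hs) hst (ht.trans ht1) v))
    ht01 hq0one hqpos hqδ hβq0 hxq hyq hxy0 hxN hyN
  set K := max (max (LN N) (MN N)) (max (max Lg (a * T ^ (1 - α)))
    (max (‖g 0 0‖ + h 0 T ^ β) ((∫ s in (0:ℝ)..T, |b s| ^ (1 / (1 - α))) ^ (1 - α))))
  have hLgK : Lg ≤ K := le_max_of_le_right (le_max_of_le_left (le_max_left _ _))
  have hMNK : MN N ≤ K := le_max_of_le_left (le_max_right _ _)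
  have hhK : h t0 t1 ^ β ≤ K := by
    have hh : h t0 t1 ≤ h 0 T := hctrl.le_of_subset le_rfl ht0 ht01 ht1 le_rfl
    refine (Real.rpow_le_rpow (hctrl.2.2.2 t0 t1 ht0 ht01 ht1) hh hβ0.le).trans ?_
    exact (le_add_of_nonneg_left (norm_nonneg _)).trans
      (le_max_of_le_right (le_max_of_le_right (le_max_left _ _)))
  have hX := Real.rpow_nonneg (pVar_nonneg q x t0 t1) δ
  have hY := Real.rpow_nonneg (pVar_nonneg q y t0 t1) δ
  refine hbound.trans ?_
  calc _ ≤ pVar q (fun t => x t - y t) t0 t1 *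
        (K + K + K * (pVar q x t0 t1 ^ δ + pVar q y t0 t1 ^ δ)) := by
        gcongr
        exact pVar_nonneg _ _ _ _
    _ = _ := by ring

/-- Lemma `lemma2`(iii): under (H1)–(H3), for paths `x, y` of finite
`q`-variation on `[t0,t1] ⊆ [0,T]` with `x t0 = y t0` and sup-norm bounded by `N`,
`|||g(·,x_·) - g(·,y_·)|||_{q0-var} ≤ M'_N |||x - y|||_{q-var} (2 + |||x|||^δ + |||y|||^δ)`. -/
theorem stmt8
    {d m : ℕ} (p T : ℝ) (hp1 : 1 < p) (hp2 : p < 2) (hT : 0 < T)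
    (f : ℝ → Ed d → Ed d) (g : ℝ → Ed d → (Ed m →L[ℝ] Ed d))
    (hf : ContinuousOn (fun pr : ℝ × Ed d => f pr.1 pr.2) (Set.Icc 0 T ×ˢ Set.univ))
    (hg : ContinuousOn (fun pr : ℝ × Ed d => g pr.1 pr.2) (Set.Icc 0 T ×ˢ Set.univ))
    (Dg : ℝ → Ed d → (Ed d →L[ℝ] Ed m →L[ℝ] Ed d))
    (hDg : ∀ t ∈ Set.Icc (0:ℝ) T, ∀ x : Ed d, HasFDerivAt (g t) (Dg t x) x)
    (β δ Lg : ℝ) (hβ0 : 0 < β) (hβ1 : β ≤ 1) (hδ0 : 0 < δ) (hδ1 : δ ≤ 1) (hLg : 0 < Lg)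
    (h : ℝ → ℝ → ℝ) (hctrl : IsControlOn 0 T h)
    (MN : ℝ → ℝ) (hMN : ∀ N : ℝ, 0 ≤ N → 0 < MN N)
    (H1i : ∀ t ∈ Set.Icc (0:ℝ) T, ∀ x y : Ed d, ‖g t x - g t y‖ ≤ Lg * ‖x - y‖)
    (H1ii : ∀ N : ℝ, 0 ≤ N → ∀ t ∈ Set.Icc (0:ℝ) T, ∀ x y : Ed d, ‖x‖ ≤ N → ‖y‖ ≤ N →
      ‖Dg t x - Dg t y‖ ≤ MN N * ‖x - y‖ ^ δ)
    (H1iii : ∀ s t : ℝ, 0 ≤ s → s < t → t ≤ T → ∀ x : Ed d,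
      ‖g t x - g s x‖ + ‖Dg t x - Dg s x‖ ≤ h s t ^ β)
    (a α : ℝ) (b : ℝ → ℝ) (ha : 0 < a) (hα1 : 1 / 2 ≤ α) (hα2 : α < 1)
    (hbmem : IntervalIntegrable (fun s => |b s| ^ (1 / (1 - α))) MeasureTheory.volume 0 T)
    (LN : ℝ → ℝ) (hLN : ∀ N : ℝ, 0 ≤ N → 0 < LN N)
    (H2i : ∀ N : ℝ, 0 ≤ N → ∀ t ∈ Set.Icc (0:ℝ) T, ∀ x y : Ed d, ‖x‖ ≤ N → ‖y‖ ≤ N →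
      ‖f t x - f t y‖ ≤ LN N * ‖x - y‖)
    (H2ii : ∀ t ∈ Set.Icc (0:ℝ) T, ∀ x : Ed d, ‖f t x‖ ≤ a * ‖x‖ + b t)
    (H3a : p - 1 < δ) (H3b : 1 - 1 / p < β) (H3c : 1 - 1 / p < δ * α)
    (q0 q : ℝ)
    (hq0a : 1 - 1 / p < 1 / q0)
    (hq0b : 1 / q0 < min (min β (δ * α)) (min (δ / p) (1 / 2)))
    (hqa : 1 / (q0 * δ) ≤ 1 / q) (hqb : 1 / q < min α (1 / p))
    (t0 t1 : ℝ) (ht0 : 0 ≤ t0) (ht01 : t0 ≤ t1) (ht1 : t1 ≤ T)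
    (N : ℝ) (hN : 0 ≤ N)
    (x y : ℝ → Ed d)
    (hx : ContinuousOn x (Set.Icc t0 t1)) (hxq : FinitePVar q x t0 t1)
    (hy : ContinuousOn y (Set.Icc t0 t1)) (hyq : FinitePVar q y t0 t1)
    (hxy0 : x t0 = y t0)
    (hxN : ∀ t ∈ Set.Icc t0 t1, ‖x t‖ ≤ N) (hyN : ∀ t ∈ Set.Icc t0 t1, ‖y t‖ ≤ N) :
    pVar q0 (fun t => g t (x t) - g t (y t)) t0 t1 ≤
      max (max (LN N) (MN N)) (max (max Lg (a * T ^ (1 - α))) (max (‖g 0 0‖ + h 0 T ^ β) ((∫ s in (0:ℝ)..T, |b s| ^ (1 / (1 - α))) ^ (1 - α)))) *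
        pVar q (fun t => x t - y t) t0 t1 *
        (2 + pVar q x t0 t1 ^ δ + pVar q y t0 t1 ^ δ) :=
  stmt8_general p T hp1 g Dg hDg β δ Lg hβ0 hδ0 hδ1 hLg h hctrl MN hMN H1i H1ii H1iii a α b LN q0 q
    hq0a hq0b hqa t0 t1 ht0 ht01 ht1 N hN x y hxq hyq hxy0 hxN hyN
end
end
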